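/- arXiv:math/0612084 — 2 statements merged into one kernel-verified Lean document; each statement's English description precedes it below -/
import Mathlib

section
/- Let X, Y be nonempty ordered sets and M an ordered commutative monoid whose addition is strictly monotone in both arguments and whose order is well-founded (admits no infinite strictly decreasing sequences). Given interpretations φ_* : X^m → X^n, φ^* : Y^n → Y^m, [φ] : X^m × Y^n → M (all monotone) for each generator φ : m → n, extended to circuits by the standard rules, the relation f > g (for parallel circuits f, g : m → n) defined by: for all x ∈ X^m, y ∈ Y^n, f_*(x) ≥ g_*(x), f^*(y) ≥ g^*(y), and [f](x,y) > [g](x,y), is a termination order on Σ. -/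
/-- Circuits over a 2-polygraph with one 0-cell and one 1-cell:
generators `gen m n` are 2-cells with `m` inputs and `n` outputs;
circuits are built by horizontal (`hcomp`, ⋆₀) and vertical (`vcomp`, ⋆₁) composition. -/
inductive Circuit (gen : ℕ → ℕ → Type) : ℕ → ℕ → Type
  | id (n : ℕ) : Circuit gen n n
  | ofGen {m n : ℕ} : gen m n → Circuit gen m n
  | hcomp {m n p q : ℕ} : Circuit gen m n → Circuit gen p q → Circuit gen (m + p) (n + q)
  | vcomp {m n p : ℕ} : Circuit gen m n → Circuit gen n p → Circuit gen m p

/-- Interpretations of the generators: descending courants, ascending courants, heat. -/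
structure Interp (gen : ℕ → ℕ → Type) (X Y M : Type) where
  down : ∀ {m n : ℕ}, gen m n → (Fin m → X) → (Fin n → X)
  up : ∀ {m n : ℕ}, gen m n → (Fin n → Y) → (Fin m → Y)
  heat : ∀ {m n : ℕ}, gen m n → (Fin m → X) → (Fin n → Y) → M

variable {gen : ℕ → ℕ → Type} {X Y M : Type}

/-- Extension of the descending-courant interpretation to circuits. -/
def Circuit.down (I : Interp gen X Y M) : ∀ {m n : ℕ}, Circuit gen m n → (Fin m → X) → (Fin n → X)
  | _, _, .id _, x => x
  | _, _, .ofGen φ, x => I.down φ x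
  | _, _, .hcomp f g, x =>
      Fin.append (f.down I (x ∘ Fin.castAdd _)) (g.down I (x ∘ Fin.natAdd _))
  | _, _, .vcomp f g, x => g.down I (f.down I x)

/-- Extension of the ascending-courant interpretation to circuits. -/
def Circuit.up (I : Interp gen X Y M) : ∀ {m n : ℕ}, Circuit gen m n → (Fin n → Y) → (Fin m → Y)
  | _, _, .id _, y => y
  | _, _, .ofGen φ, y => I.up φ y
  | _, _, .hcomp f g, y =>
      Fin.append (f.up I (y ∘ Fin.castAdd _)) (g.up I (y ∘ Fin.natAdd _))
  | _, _, .vcomp f g, y => f.up I (g.up I y)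

/-- Extension of the heat interpretation to circuits. -/
def Circuit.heat [Zero M] [Add M] (I : Interp gen X Y M) :
    ∀ {m n : ℕ}, Circuit gen m n → (Fin m → X) → (Fin n → Y) → M
  | _, _, .id _, _, _ => 0
  | _, _, .ofGen φ, x, y => I.heat φ x y
  | _, _, .hcomp f g, x, y =>
      f.heat I (x ∘ Fin.castAdd _) (y ∘ Fin.castAdd _) +
        g.heat I (x ∘ Fin.natAdd _) (y ∘ Fin.natAdd _)
  | _, _, .vcomp f g, x, y => f.heat I x (g.up I y) + g.heat I (f.down I x) y

/-- The generator interpretations are monotone. -/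
def Interp.MonotoneInterp [Preorder X] [Preorder Y] [Preorder M] (I : Interp gen X Y M) : Prop :=
  (∀ {m n : ℕ} (φ : gen m n), Monotone (I.down φ)) ∧
  (∀ {m n : ℕ} (φ : gen m n), Monotone (I.up φ)) ∧
  (∀ {m n : ℕ} (φ : gen m n),
    Monotone (fun p : (Fin m → X) × (Fin n → Y) => I.heat φ p.1 p.2))

/-- The order on parallel circuits built from the interpretations:
`f > g` iff for all courants, `f` transmits larger courants and produces strictly more heat,
heats being compared by the strict order `ltM` on `M`. -/
def CGT [Preorder X] [Preorder Y] [Zero M] [Add M] (I : Interp gen X Y M)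
    (ltM : M → M → Prop) {m n : ℕ} (f g : Circuit gen m n) : Prop :=
  ∀ (x : Fin m → X) (y : Fin n → Y),
    g.down I x ≤ f.down I x ∧ g.up I y ≤ f.up I y ∧ ltM (g.heat I x y) (f.heat I x y)

/-- A termination order on a 2-polygraph: a well-founded strict order on parallel
circuits for which the four composition maps are strictly monotone. -/
structure IsTerminationOrder (gen : ℕ → ℕ → Type)
    (gt : ∀ m n : ℕ, Circuit gen m n → Circuit gen m n → Prop) : Prop where
  irrefl : ∀ {m n : ℕ} (f : Circuit gen m n), ¬ gt m n f f
  trans : ∀ {m n : ℕ} {f g h : Circuit gen m n}, gt m n f g → gt m n g h → gt m n f h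
  wf : ∀ m n : ℕ, ¬ ∃ f : ℕ → Circuit gen m n, ∀ i : ℕ, gt m n (f i) (f (i + 1))
  hcomp_left : ∀ {m n p q : ℕ} (h : Circuit gen m n) {f g : Circuit gen p q},
    gt p q f g → gt (m + p) (n + q) (h.hcomp f) (h.hcomp g)
  hcomp_right : ∀ {m n p q : ℕ} (h : Circuit gen m n) {f g : Circuit gen p q},
    gt p q f g → gt (p + m) (q + n) (f.hcomp h) (g.hcomp h)
  vcomp_left : ∀ {m n p : ℕ} (h : Circuit gen m n) {f g : Circuit gen n p},
    gt n p f g → gt m p (h.vcomp f) (h.vcomp g)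
  vcomp_right : ∀ {m n p : ℕ} (h : Circuit gen n p) {f g : Circuit gen m n},
    gt m n f g → gt m p (f.vcomp h) (g.vcomp h)

/-- One-step reduction generated by a set `R` of 3-cells between parallel circuits:
rewriting an occurrence of the source of a 3-cell inside a context
`h ⋆₁ (k₁ ⋆₀ f₀ ⋆₀ k₂) ⋆₁ k`. -/
def Red (R : ∀ m n : ℕ, Circuit gen m n → Circuit gen m n → Prop)
    {p q : ℕ} (f g : Circuit gen p q) : Prop :=
  ∃ (a b c d m n : ℕ) (k₁ : Circuit gen a b) (k₂ : Circuit gen c d)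
    (f₀ g₀ : Circuit gen m n) (h : Circuit gen p (a + m + c))
    (k : Circuit gen (b + n + d) q),
    R m n f₀ g₀ ∧
    f = (h.vcomp ((k₁.hcomp f₀).hcomp k₂)).vcomp k ∧
    g = (h.vcomp ((k₁.hcomp g₀).hcomp k₂)).vcomp k

section Aux

variable {gen : ℕ → ℕ → Type} {X Y M : Type}

lemma fin_append_le {α : Type} [Preorder α] {m n : ℕ} {u u' : Fin m → α} {v v' : Fin n → α}
    (hu : u ≤ u') (hv : v ≤ v') : Fin.append u v ≤ Fin.append u' v' := by
  intro i
  refine Fin.addCases (fun j => ?_) (fun j => ?_) i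
  · simpa [Fin.append_left] using hu j
  · simpa [Fin.append_right] using hv j

lemma circ_mono [Preorder X] [Preorder Y] [AddCommMonoid M] [Preorder M]
    (I : Interp gen X Y M) (hI : I.MonotoneInterp)
    (hadd_mono : ∀ a b c : M, a ≤ b → a + c ≤ b + c) :
    ∀ (m n : ℕ) (f : Circuit gen m n),
      Monotone (f.down I) ∧ Monotone (f.up I) ∧
      (∀ x x' y y', x ≤ x' → y ≤ y' → f.heat I x y ≤ f.heat I x' y') := by
  obtain ⟨hd, hu, hh⟩ := hI
  intro m n f
  induction f with
  | id n => exact ⟨fun _ _ h => h, fun _ _ h => h, fun _ _ _ _ _ _ => le_refl 0⟩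
  | ofGen φ =>
    exact ⟨hd φ, hu φ, fun x x' y y' hx hy => hh φ (Prod.mk_le_mk.2 ⟨hx, hy⟩)⟩
  | hcomp f g ihf ihg =>
    obtain ⟨fd, fu, fh⟩ := ihf
    obtain ⟨gd, gu, gh⟩ := ihg
    refine ⟨fun x x' hx => ?_, fun y y' hy => ?_, fun x x' y y' hx hy => ?_⟩
    · exact fin_append_le (fd fun j => hx _) (gd fun j => hx _)
    · exact fin_append_le (fu fun j => hy _) (gu fun j => hy _)
    · simp only [Circuit.heat]
      calc Circuit.heat I f _ _ + Circuit.heat I g _ _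
          ≤ Circuit.heat I f (x' ∘ Fin.castAdd _) (y' ∘ Fin.castAdd _)
            + Circuit.heat I g (x ∘ Fin.natAdd _) (y ∘ Fin.natAdd _) :=
            hadd_mono _ _ _ (fh _ _ _ _ (fun j => hx _) (fun j => hy _))
        _ ≤ _ := by
            rw [add_comm, add_comm (Circuit.heat I f _ _)]
            exact hadd_mono _ _ _ (gh _ _ _ _ (fun j => hx _) (fun j => hy _))
  | vcomp f g ihf ihg =>
    obtain ⟨fd, fu, fh⟩ := ihf
    obtain ⟨gd, gu, gh⟩ := ihg
    refine ⟨fun x x' hx => gd (fd hx), fun y y' hy => fu (gu hy),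
      fun x x' y y' hx hy => ?_⟩
    simp only [Circuit.heat]
    calc Circuit.heat I f x (Circuit.up I g y) + Circuit.heat I g (Circuit.down I f x) y
        ≤ Circuit.heat I f x' (Circuit.up I g y') + Circuit.heat I g (Circuit.down I f x) y :=
          hadd_mono _ _ _ (fh _ _ _ _ hx (gu hy))
      _ ≤ _ := by
          rw [add_comm, add_comm (Circuit.heat I f _ _)]
          exact hadd_mono _ _ _ (gh _ _ _ _ (fd hx) hy)

end Aux

theorem stmt1' {gen : ℕ → ℕ → Type} {X Y M : Type}
    [Preorder X] [Preorder Y] [AddCommMonoid M] [Preorder M]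
    [Nonempty X] [Nonempty Y]
    (I : Interp gen X Y M) (hI : I.MonotoneInterp)
    (hadd_strict : ∀ a b c : M, a < b → a + c < b + c)
    (hadd_mono : ∀ a b c : M, a ≤ b → a + c ≤ b + c)
    (hwf : ¬ ∃ u : ℕ → M, ∀ i : ℕ, u (i + 1) < u i) :
    IsTerminationOrder gen (fun m n f g => CGT I (· < ·) f g) := by
  have mono := circ_mono I hI hadd_mono
  have hadd_strict' : ∀ a b c : M, a < b → c + a < c + b := by
    intro a b c h; rw [add_comm c a, add_comm c b]; exact hadd_strict a b c h
  have hadd_mono' : ∀ a b c : M, a ≤ b → c + a ≤ c + b := by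
    intro a b c h; rw [add_comm c a, add_comm c b]; exact hadd_mono a b c h
  constructor
  · intro m n f hf
    exact lt_irrefl _ ((hf (fun _ => Classical.arbitrary X) (fun _ => Classical.arbitrary Y)).2.2)
  · intro m n f g h hfg hgh x y
    obtain ⟨h1, h2, h3⟩ := hfg x y
    obtain ⟨h4, h5, h6⟩ := hgh x y
    exact ⟨le_trans h4 h1, le_trans h5 h2, lt_trans h6 h3⟩
  · intro m n ⟨f, hf⟩
    exact hwf ⟨fun i => (f i).heat I (fun _ => Classical.arbitrary X)
      (fun _ => Classical.arbitrary Y), fun i => (hf i _ _).2.2⟩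
  · intro m n p q h f g hfg x y
    obtain ⟨d1, u1, h1⟩ := hfg (x ∘ Fin.natAdd _) (y ∘ Fin.natAdd _)
    exact ⟨fin_append_le le_rfl d1, fin_append_le le_rfl u1, hadd_strict' _ _ _ h1⟩
  · intro m n p q h f g hfg x y
    obtain ⟨d1, u1, h1⟩ := hfg (x ∘ Fin.castAdd _) (y ∘ Fin.castAdd _)
    exact ⟨fin_append_le d1 le_rfl, fin_append_le u1 le_rfl, hadd_strict _ _ _ h1⟩
  · intro m n p h f g hfg x y
    obtain ⟨d1, u1, h1⟩ := hfg (h.down I x) y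
    refine ⟨d1, (mono _ _ h).2.1 u1, ?_⟩
    simp only [Circuit.heat]
    calc Circuit.heat I h x (Circuit.up I g y) + Circuit.heat I g (Circuit.down I h x) y
        ≤ Circuit.heat I h x (Circuit.up I f y) + Circuit.heat I g (Circuit.down I h x) y :=
          hadd_mono _ _ _ ((mono _ _ h).2.2 _ _ _ _ le_rfl u1)
      _ < _ := hadd_strict' _ _ _ h1
  · intro m n p h f g hfg x y
    obtain ⟨d1, u1, h1⟩ := hfg x (h.up I y)
    refine ⟨(mono _ _ h).1 d1, u1, ?_⟩
    simp only [Circuit.heat]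
    calc Circuit.heat I g x (Circuit.up I h y) + Circuit.heat I h (Circuit.down I g x) y
        ≤ Circuit.heat I g x (Circuit.up I h y) + Circuit.heat I h (Circuit.down I f x) y :=
          hadd_mono' _ _ _ ((mono _ _ h).2.2 _ _ _ _ d1 le_rfl)
      _ < _ := hadd_strict _ _ _ h1


/-- given monotone interpretations into nonempty ordered sets `X, Y` and an
ordered commutative monoid `M` with strictly monotone addition and well-founded order, the
relation `f > g` defined by pointwise comparison of courants and strict comparison of heats
is a termination order on Σ. -/
theorem stmt1 {gen : ℕ → ℕ → Type} {X Y M : Type}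
    [Preorder X] [Preorder Y] [AddCommMonoid M] [Preorder M]
    [Nonempty X] [Nonempty Y]
    (I : Interp gen X Y M) (hI : I.MonotoneInterp)
    (hadd_strict : ∀ a b c : M, a < b → a + c < b + c)
    (hadd_mono : ∀ a b c : M, a ≤ b → a + c ≤ b + c)
    (hwf : ¬ ∃ u : ℕ → M, ∀ i : ℕ, u (i + 1) < u i) :
    IsTerminationOrder gen (fun m n f g => CGT I (· < ·) f g) :=
  stmt1' I hI hadd_strict hadd_mono hwf
end

section
/- The relation > on parallel circuits defined via the interpretations is compatible with vertical composition: if f > g (where f, g : m → n) then for any circuits h : p → m and k : n → q, h ⋆₁ f ⋆₁ k > h ⋆₁ g ⋆₁ k. -/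
variable {gen : ℕ → ℕ → Type} {X Y M : Type}

/-!
Every circuit interpretation is monotone, by induction on the circuit. Composing with `h` or `k`
therefore preserves the inequalities between courants, and the heat of a vertical composite is a sum
in which the summand coming from `f` and `g` increases strictly while the other one increases
weakly.
-/

theorem Fin.append_le_append {α : Type*} [Preorder α] {m n : ℕ} {a a' : Fin m → α}
    {b b' : Fin n → α} (ha : a ≤ a') (hb : b ≤ b') : Fin.append a b ≤ Fin.append a' b' := by
  intro i
  induction i using Fin.addCases with
  | left j => simpa only [Fin.append_left] using ha j
  | right j => simpa only [Fin.append_right] using hb j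

namespace Circuit

variable [Preorder X] [Preorder Y] [Preorder M] {I : Interp gen X Y M}

theorem down_mono (hI : I.MonotoneInterp) {m n : ℕ} (c : Circuit gen m n) :
    Monotone (c.down I) := by
  induction c with
  | id n => exact monotone_id
  | ofGen φ => exact hI.1 φ
  | hcomp f g ihf ihg =>
      exact fun x x' hx => Fin.append_le_append (ihf fun i => hx _) (ihg fun i => hx _)
  | vcomp f g ihf ihg => exact ihg.comp ihf

theorem up_mono (hI : I.MonotoneInterp) {m n : ℕ} (c : Circuit gen m n) :
    Monotone (c.up I) := by
  induction c with
  | id n => exact monotone_id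
  | ofGen φ => exact hI.2.1 φ
  | hcomp f g ihf ihg =>
      exact fun y y' hy => Fin.append_le_append (ihf fun i => hy _) (ihg fun i => hy _)
  | vcomp f g ihf ihg => exact ihf.comp ihg

theorem heat_mono [Zero M] [Add M] [AddLeftMono M] [AddRightMono M]
    (hI : I.MonotoneInterp) {m n : ℕ} (c : Circuit gen m n) {x x' : Fin m → X}
    {y y' : Fin n → Y} (hx : x ≤ x') (hy : y ≤ y') : c.heat I x y ≤ c.heat I x' y' := by
  induction c with
  | id n => exact le_rfl
  | ofGen φ => exact hI.2.2 φ (Prod.mk_le_mk.mpr ⟨hx, hy⟩)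
  | hcomp f g ihf ihg =>
      exact add_le_add (ihf (fun i => hx _) fun i => hy _) (ihg (fun i => hx _) fun i => hy _)
  | vcomp f g ihf ihg => exact add_le_add (ihf hx (up_mono hI g hy)) (ihg (down_mono hI f hx) hy)

end Circuit

namespace CGT

variable [Preorder X] [Preorder Y] [AddCommMonoid M] [Preorder M] [AddLeftMono M]
  [AddLeftStrictMono M] {I : Interp gen X Y M} {m n : ℕ} {f g : Circuit gen m n}

theorem vcomp_left (hI : I.MonotoneInterp) {p : ℕ} (h : Circuit gen p m)
    (hfg : CGT I (· < ·) f g) : CGT I (· < ·) (h.vcomp f) (h.vcomp g) := fun x y =>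
  let ⟨hdown, hup, hheat⟩ := hfg (h.down I x) y
  ⟨hdown, h.up_mono hI hup, add_lt_add_of_le_of_lt (h.heat_mono hI le_rfl hup) hheat⟩

theorem vcomp_right (hI : I.MonotoneInterp) {q : ℕ} (k : Circuit gen n q)
    (hfg : CGT I (· < ·) f g) : CGT I (· < ·) (f.vcomp k) (g.vcomp k) := fun x y =>
  let ⟨hdown, hup, hheat⟩ := hfg x (k.up I y)
  ⟨k.down_mono hI hdown, hup, add_lt_add_of_lt_of_le hheat (k.heat_mono hI hdown le_rfl)⟩

end CGT

/-- the relation `>` is compatible with vertical composition: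
if `f > g : m → n` then for any `h : p → m` and `k : n → q`,
`h ⋆₁ f ⋆₁ k > h ⋆₁ g ⋆₁ k`. -/
theorem stmt7 {gen : ℕ → ℕ → Type} {X Y M : Type}
    [Preorder X] [Preorder Y] [AddCommMonoid M] [Preorder M]
    (I : Interp gen X Y M) (hI : I.MonotoneInterp)
    (hadd_strict : ∀ a b c : M, a < b → a + c < b + c)
    (hadd_mono : ∀ a b c : M, a ≤ b → a + c ≤ b + c)
    {m n p q : ℕ} (f g : Circuit gen m n) (h : Circuit gen p m) (k : Circuit gen n q)
    (hfg : CGT I (· < ·) f g) :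
    CGT I (· < ·) ((h.vcomp f).vcomp k) ((h.vcomp g).vcomp k) := by
  have : AddLeftMono M := ⟨fun c a b hab => by simpa only [add_comm c] using hadd_mono a b c hab⟩
  have : AddLeftStrictMono M :=
    ⟨fun c a b hab => by simpa only [add_comm c] using hadd_strict a b c hab⟩
  exact (hfg.vcomp_left hI h).vcomp_right hI k
end
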